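/- Let A be symmetric positive definite. A symmetric positive definite matrix X satisfies X² = A if and only if X = [(X+A)⁻¹ + (X+I)⁻¹]⁻¹, i.e., X is a fixed point of the Sra iteration. -/

import Mathlib

open Matrix Filter

variable {n : ℕ}

/-- Largest (real) eigenvalue: supremum of the real spectrum. -/
noncomputable def maxEig (M : Matrix (Fin n) (Fin n) ℝ) : ℝ := sSup (spectrum ℝ M)

/-- Smallest (real) eigenvalue: infimum of the real spectrum. -/
noncomputable def minEig (M : Matrix (Fin n) (Fin n) ℝ) : ℝ := sInf (spectrum ℝ M)

/-- Thompson metric via the spectral formula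
`δ_T(M,N) = max {log λ_max(M⁻¹N), log λ_max(N⁻¹M)}`. -/
noncomputable def deltaT (X Y : Matrix (Fin n) (Fin n) ℝ) : ℝ :=
  max (Real.log (maxEig (X⁻¹ * Y))) (Real.log (maxEig (Y⁻¹ * X)))

/-- Spectral (ℓ²-operator) norm of a matrix. -/
noncomputable def sNorm (M : Matrix (Fin n) (Fin n) ℝ) : ℝ :=
  ‖Matrix.toEuclideanCLM (𝕜 := ℝ) M‖

open Classical in
/-- The unique positive semidefinite square root (junk value `1` off PSD matrices). -/
noncomputable def sqrtM (M : Matrix (Fin n) (Fin n) ℝ) : Matrix (Fin n) (Fin n) ℝ :=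
  if h : M.PosSemidef then
    h.1.eigenvectorUnitary.1 * diagonal ((↑) ∘ (Real.sqrt ·) ∘ h.1.eigenvalues) *
      (star h.1.eigenvectorUnitary : Matrix (Fin n) (Fin n) ℝ)
  else 1

/-- Matrix logarithm via the continuous functional calculus. -/
noncomputable def mlog (M : Matrix (Fin n) (Fin n) ℝ) : Matrix (Fin n) (Fin n) ℝ :=
  cfc Real.log M

/-- Loewner order: `A ⪯ B` iff `B - A` is positive semidefinite. -/
def loewner (A B : Matrix (Fin n) (Fin n) ℝ) : Prop := (B - A).PosSemidef

/-! Multiplying the fixed-point equation on the right by `X` and using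
`(X + 1)⁻¹ X = 1 - (X + 1)⁻¹`, it becomes `(X + A)⁻¹ X = (X + 1)⁻¹`, i.e. `X (X + 1) = X + A`,
which is `X² = A`: pure ring algebra once `X`, `X + A` and `X + 1` are units. -/

open scoped Ring

theorem eq_inverse_iff_mul_eq_one {M₀ : Type*} [MonoidWithZero M₀] {x s : M₀} (hx : IsUnit x) :
    x = s⁻¹ʳ ↔ s * x = 1 := by
  constructor
  · rintro rfl
    exact Ring.mul_inverse_cancel s (isUnit_ringInverse.mp hx)
  · intro hsx
    have hs : s = x⁻¹ʳ := by rwa [← one_mul x⁻¹ʳ, Ring.eq_mul_inverse_iff_mul_eq _ _ _ hx]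
    rw [hs, Ring.inverse_inverse hx]

section Ring

variable {R : Type*} [Ring R] {x a : R}

theorem inverse_add_inverse_mul_eq_one_iff (hxa : IsUnit (x + a)) (hx1 : IsUnit (x + 1)) :
    ((x + a)⁻¹ʳ + (x + 1)⁻¹ʳ) * x = 1 ↔ x * (x + 1) = x + a := by
  have hx1_inv : (x + 1)⁻¹ʳ * x = 1 - (x + 1)⁻¹ʳ := by
    rw [eq_sub_iff_add_eq, ← mul_add_one, Ring.inverse_mul_cancel _ hx1]
  rw [add_mul, hx1_inv, add_sub, sub_eq_iff_eq_add, add_comm (1 : R), add_left_inj,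
    Ring.inverse_mul_eq_iff_eq_mul _ _ _ hxa, ← Ring.eq_mul_inverse_iff_mul_eq _ _ _ hx1]

theorem sq_eq_iff_eq_inverse_inverse_add_inverse (hx : IsUnit x) (hxa : IsUnit (x + a))
    (hx1 : IsUnit (x + 1)) : x ^ 2 = a ↔ x = ((x + a)⁻¹ʳ + (x + 1)⁻¹ʳ)⁻¹ʳ := by
  rw [eq_inverse_iff_mul_eq_one hx, inverse_add_inverse_mul_eq_one_iff hxa hx1, mul_add_one,
    add_comm x a, add_left_inj, sq]

end Ring

theorem stmt13 (A X : Matrix (Fin n) (Fin n) ℝ) (hA : A.PosDef) (hX : X.PosDef) :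
    X ^ 2 = A ↔ X = ((X + A)⁻¹ + (X + 1)⁻¹)⁻¹ := by
  simp only [nonsing_inv_eq_ringInverse]
  exact sq_eq_iff_eq_inverse_inverse_add_inverse hX.isUnit (hX.add hA).isUnit
    (hX.add PosDef.one).isUnit
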